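/- Let a ≤ b be real numbers, n ≥ 1 an integer, and let A : [a,b] → M_n(ℝ) be continuous with A(t) strictly upper triangular for every t ∈ [a,b]. Suppose T : [a,b] → M_n(ℝ) is differentiable with T(a) = I and T'(t) = A(t)·T(t) for all t ∈ [a,b]. Then T(b) = I + ∑_{k=1}^{n−1} ∫_{Δ_k} A(t_k)·A(t_{k−1})⋯A(t₁) dt₁⋯dt_k; moreover, the k-th iterated integral ∫_{Δ_k} A(t_k)⋯A(t₁) dt₁⋯dt_k vanishes for every k ≥ n. (Thus the parallel transport — the right Lie integral — of a 1-form with values in the nilpotent Lie algebra of strictly upper triangular matrices equals the finite sum of its iterated integrals.) -/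

import Mathlib

open MeasureTheory

/-- The simplex `Δ_k = {(t₁,…,t_k) : a ≤ t₁ ≤ ⋯ ≤ t_k ≤ b}`. -/
def simplexSet (a b : ℝ) (k : ℕ) : Set (Fin k → ℝ) :=
  {t | (∀ r : Fin k, t r ∈ Set.Icc a b) ∧ Monotone t}

/-- The `k`-th iterated integral `∫_{Δ_k} A(t_k)·A(t_{k−1})⋯A(t₁) dt₁⋯dt_k`,
computed entrywise. -/
noncomputable def iteratedInt (n : ℕ) (a b : ℝ) (A : ℝ → Matrix (Fin n) (Fin n) ℝ)
    (k : ℕ) : Matrix (Fin n) (Fin n) ℝ :=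
  fun i j => ∫ t in simplexSet a b k, ((List.ofFn fun r : Fin k => A (t r)).reverse.prod) i j

/-- If `A : [a,b] → M_n(ℝ)` is continuous with strictly upper triangular
values and `T` solves `T' = A·T`, `T(a) = I` on `[a,b]`, then
`T(b) = I + ∑_{k=1}^{n−1} ∫_{Δ_k} A(t_k)⋯A(t₁) dt₁⋯dt_k`, and the `k`-th iterated integral
vanishes for every `k ≥ n`. -/
lemma isClosed_simplexSet (a b : ℝ) (k : ℕ) : IsClosed (simplexSet a b k) := by
  have h1 : IsClosed {t : Fin k → ℝ | ∀ r, t r ∈ Set.Icc a b} := by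
    have : {t : Fin k → ℝ | ∀ r, t r ∈ Set.Icc a b} = Set.pi Set.univ (fun _ => Set.Icc a b) := by
      ext t
      simp only [Set.mem_setOf_eq, Set.mem_univ_pi]
    rw [this]
    exact isClosed_set_pi (fun i _ => isClosed_Icc)
  have h2 : IsClosed {t : Fin k → ℝ | Monotone t} := by
    have : {t : Fin k → ℝ | Monotone t} =
        ⋂ (p : Fin k) (q : Fin k) (_ : p ≤ q), {t : Fin k → ℝ | t p ≤ t q} := by
      ext t; simp [Monotone, Set.mem_iInter]
    rw [this]
    exact isClosed_iInter fun p => isClosed_iInter fun q => isClosed_iInter fun _ =>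
      isClosed_le (continuous_apply p) (continuous_apply q)
  exact h1.inter h2

lemma isCompact_simplexSet (a b : ℝ) (k : ℕ) : IsCompact (simplexSet a b k) := by
  refine IsCompact.of_isClosed_subset (isCompact_univ_pi (fun _ : Fin k => isCompact_Icc (a := a) (b := b)))
    (isClosed_simplexSet a b k) ?_
  intro t ht
  simp only [Set.mem_univ_pi]
  exact fun r => ht.1 r

lemma measurableSet_simplexSet (a b : ℝ) (k : ℕ) : MeasurableSet (simplexSet a b k) :=
  (isClosed_simplexSet a b k).measurableSet

lemma snoc_mem_simplexSet_iff (a s : ℝ) (k : ℕ) (u : Fin k → ℝ) (x : ℝ) :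
    Fin.snoc u x ∈ simplexSet a s (k+1) ↔ x ∈ Set.Icc a s ∧ u ∈ simplexSet a x k := by
  constructor
  · rintro ⟨hmem, hmono⟩
    have hx : x ∈ Set.Icc a s := by simpa using hmem (Fin.last k)
    refine ⟨hx, ⟨fun r => ?_, fun p q hpq => ?_⟩⟩
    · have h1 := (hmem r.castSucc).1
      have h2 := hmono (Fin.le_last r.castSucc)
      simp only [Fin.snoc_castSucc, Fin.snoc_last] at h1 h2 ⊢
      exact ⟨h1, h2⟩
    · have := hmono (Fin.castSucc_le_castSucc_iff.2 hpq)
      simpa using this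
  · rintro ⟨hx, hmemu, hmono⟩
    refine ⟨fun r => ?_, ?_⟩
    · refine Fin.lastCases ?_ ?_ r
      · simpa using hx
      · intro i
        simp only [Fin.snoc_castSucc]
        exact ⟨(hmemu i).1, le_trans (hmemu i).2 hx.2⟩
    · rw [Fin.monotone_iff_le_succ]
      intro i
      rcases Fin.eq_castSucc_or_eq_last i.succ with ⟨j, hj⟩ | hj
      · rw [hj]
        simp only [Fin.snoc_castSucc]
        apply hmono
        have : (j : ℕ) = (i : ℕ) + 1 := by
          have := congrArg (Fin.val) hj
          simpa using this.symm
        simp [Fin.le_def, this]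
      · rw [hj]
        simp only [Fin.snoc_castSucc, Fin.snoc_last]
        exact (hmemu i).2

lemma strictUpper_list_prod {n : ℕ} (L : List (Matrix (Fin n) (Fin n) ℝ))
    (hL : ∀ M ∈ L, ∀ i j : Fin n, j ≤ i → M i j = 0) (i j : Fin n)
    (hij : (j : ℕ) < (i : ℕ) + L.length) : L.prod i j = 0 := by
  induction L generalizing i with
  | nil =>
    simp only [List.prod_nil]
    have hne : ¬ i = j := by
      intro h; subst h; simp at hij
    simp [Matrix.one_apply, hne]
  | cons M L ih =>
    rw [List.prod_cons, Matrix.mul_apply]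
    apply Finset.sum_eq_zero
    intro l _
    by_cases hl : l ≤ i
    · rw [hL M List.mem_cons_self i l hl, zero_mul]
    · push_neg at hl
      have : L.prod l j = 0 := by
        apply ih (fun M hM => hL M (List.mem_cons_of_mem _ hM))
        simp only [List.length_cons] at hij
        have : (i:ℕ) < l := hl
        omega
      rw [this, mul_zero]

noncomputable def picard (n : ℕ) (a : ℝ) (B : ℝ → Matrix (Fin n) (Fin n) ℝ) :
    ℕ → ℝ → Matrix (Fin n) (Fin n) ℝ
  | 0 => fun _ => 1
  | (k+1) => fun t i j => ∫ s in a..t, (B s * picard n a B k s) i j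

section picard
variable {n : ℕ} {a : ℝ} {B : ℝ → Matrix (Fin n) (Fin n) ℝ}
  (hBc : ∀ i j : Fin n, Continuous fun t => B t i j)

include hBc in
lemma picard_cont : ∀ k (i j : Fin n), Continuous fun t => picard n a B k t i j := by
  intro k
  induction k with
  | zero => intro i j; simpa [picard] using continuous_const
  | succ k ih =>
    intro i j
    have hint : Continuous fun s => (B s * picard n a B k s) i j := by
      simp only [Matrix.mul_apply]
      exact continuous_finset_sum _ fun l _ => (hBc i l).mul (ih l j)
    simp only [picard]
    exact intervalIntegral.continuous_primitive (fun c d => hint.intervalIntegrable c d) a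

include hBc in
lemma picard_hasDerivAt (k : ℕ) (i j : Fin n) (t : ℝ) :
    HasDerivAt (fun s => picard n a B (k+1) s i j) ((B t * picard n a B k t) i j) t := by
  have hint : Continuous fun s => (B s * picard n a B k s) i j := by
    simp only [Matrix.mul_apply]
    exact continuous_finset_sum _ fun l _ => (hBc i l).mul (picard_cont hBc k l j)
  simp only [picard]
  exact intervalIntegral.integral_hasDerivAt_right (hint.intervalIntegrable a t)
    (hint.stronglyMeasurable.stronglyMeasurableAtFilter) hint.continuousAt

lemma picard_at_a (k : ℕ) : picard n a B (k+1) a = 0 := by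
  ext i j
  simp [picard]

lemma picard_zero : picard n a B 0 = fun _ => 1 := rfl

end picard

section ode
variable {n : ℕ} {a b : ℝ} {B : ℝ → Matrix (Fin n) (Fin n) ℝ}
  {T : ℝ → Matrix (Fin n) (Fin n) ℝ}

/-- Zero derivative within `Icc` plus zero at `a` gives zero on `Icc`. -/
lemma zero_of_deriv_within_zero (hab : a ≤ b) (f : ℝ → ℝ)
    (hderiv : ∀ t ∈ Set.Icc a b, HasDerivWithinAt f 0 (Set.Icc a b) t)
    (hfa : f a = 0) : ∀ t ∈ Set.Icc a b, f t = 0 := by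
  have hcont : ContinuousOn f (Set.Icc a b) := fun t ht =>
    (hderiv t ht).continuousWithinAt
  intro t ht
  rw [← hfa]
  refine constant_of_has_deriv_right_zero hcont (fun x hx => ?_) t ht
  exact (hderiv x (Set.mem_Icc_of_Ico hx)).mono_of_mem_nhdsWithin
    (Icc_mem_nhdsGE_of_mem hx)

lemma T_lower_zero (hab : a ≤ b)
    (hBtri : ∀ t, ∀ i j : Fin n, j ≤ i → B t i j = 0)
    (hTa : T a = 1)
    (hT : ∀ t ∈ Set.Icc a b, ∀ i j : Fin n,
      HasDerivWithinAt (fun s => T s i j) ((B t * T t) i j) (Set.Icc a b) t) :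
    ∀ (i j : Fin n), (j : ℕ) < (i : ℕ) → ∀ t ∈ Set.Icc a b, T t i j = 0 := by
  have H : ∀ d : ℕ, ∀ i : Fin n, n - (i : ℕ) ≤ d → ∀ j : Fin n, (j : ℕ) < (i : ℕ) →
      ∀ t ∈ Set.Icc a b, T t i j = 0 := by
    intro d
    induction d with
    | zero => intro i hi; exact absurd hi (by have := i.isLt; omega)
    | succ d ih =>
      intro i hi j hij
      refine zero_of_deriv_within_zero hab _ (fun t ht => ?_) ?_
      · have h0 : (B t * T t) i j = 0 := by
          rw [Matrix.mul_apply]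
          apply Finset.sum_eq_zero
          intro l _
          by_cases hl : l ≤ i
          · rw [hBtri t i l hl, zero_mul]
          · push_neg at hl
            rw [ih l (by omega) j (by omega) t ht, mul_zero]
        simpa [h0] using hT t ht i j
      · rw [hTa, Matrix.one_apply_ne (by intro h; subst h; omega)]
  intro i j hij
  exact H n i (by have := i.isLt; omega) j hij
end ode

section main
variable {n : ℕ} {a b : ℝ} {B : ℝ → Matrix (Fin n) (Fin n) ℝ}
  {T : ℝ → Matrix (Fin n) (Fin n) ℝ}

lemma T_eq_picard_aux (hab : a ≤ b)
    (hBc : ∀ i j : Fin n, Continuous fun t => B t i j)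
    (hBtri : ∀ t, ∀ i j : Fin n, j ≤ i → B t i j = 0)
    (hTa : T a = 1)
    (hT : ∀ t ∈ Set.Icc a b, ∀ i j : Fin n,
      HasDerivWithinAt (fun s => T s i j) ((B t * T t) i j) (Set.Icc a b) t) :
    ∀ m : ℕ, ∀ i j : Fin n, (j : ℕ) < (i : ℕ) + m → ∀ t ∈ Set.Icc a b,
      (T t - ∑ k ∈ Finset.range m, picard n a B k t) i j = 0 := by
  intro m
  induction m with
  | zero =>
    intro i j hij t ht
    simpa using T_lower_zero hab hBtri hTa hT i j (by omega) t ht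
  | succ m ih =>
    intro i j hij
    have key : ∀ t ∈ Set.Icc a b,
        HasDerivWithinAt (fun s => (T s - ∑ k ∈ Finset.range (m+1), picard n a B k s) i j)
          0 (Set.Icc a b) t := by
      intro t ht
      have h1 : HasDerivAt (fun s => ∑ k ∈ Finset.range (m+1), picard n a B k s i j)
          (∑ k ∈ Finset.range m, (B t * picard n a B k t) i j) t := by
        have hsum : HasDerivAt (fun s => ∑ k ∈ Finset.range (m+1), picard n a B k s i j)
            (∑ k ∈ Finset.range (m+1),
              (if k = 0 then 0 else (B t * picard n a B (k-1) t) i j)) t := by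
          apply HasDerivAt.fun_sum
          intro k _
          rcases k with _ | k'
          · simpa [picard] using (hasDerivAt_const t ((1 : Matrix (Fin n) (Fin n) ℝ) i j))
          · simpa using picard_hasDerivAt hBc k' i j t
        have : (∑ k ∈ Finset.range (m+1),
            (if k = 0 then 0 else (B t * picard n a B (k-1) t) i j))
            = ∑ k ∈ Finset.range m, (B t * picard n a B k t) i j := by
          rw [Finset.sum_range_succ']
          simp
        rwa [this] at hsum
      have h2 : HasDerivWithinAt
          (fun s => T s i j - ∑ k ∈ Finset.range (m+1), picard n a B k s i j)
          ((B t * T t) i j - ∑ k ∈ Finset.range m, (B t * picard n a B k t) i j)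
          (Set.Icc a b) t := (hT t ht i j).sub h1.hasDerivWithinAt
      have hD : (B t * T t) i j - ∑ k ∈ Finset.range m, (B t * picard n a B k t) i j = 0 := by
        have heq : (B t * T t) i j - ∑ k ∈ Finset.range m, (B t * picard n a B k t) i j
            = (B t * (T t - ∑ k ∈ Finset.range m, picard n a B k t)) i j := by
          rw [Matrix.mul_sub, Finset.mul_sum]
          simp [Matrix.sub_apply, Matrix.sum_apply]
        rw [heq, Matrix.mul_apply]
        apply Finset.sum_eq_zero
        intro l _
        by_cases hl : l ≤ i
        · rw [hBtri t i l hl, zero_mul]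
        · push_neg at hl
          rw [ih l j (by omega) t ht, mul_zero]
      rw [hD] at h2
      simpa [Matrix.sub_apply, Matrix.sum_apply] using h2
    have hfa : (T a - ∑ k ∈ Finset.range (m+1), picard n a B k a) i j = 0 := by
      have : ∑ k ∈ Finset.range (m+1), picard n a B k a = 1 := by
        rw [Finset.sum_range_succ']
        simp [picard_at_a, picard_zero]
      rw [hTa, this, sub_self]
      simp
    intro t ht
    exact zero_of_deriv_within_zero hab _ key hfa t ht

lemma T_eq_picard_sum (hab : a ≤ b)
    (hBc : ∀ i j : Fin n, Continuous fun t => B t i j)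
    (hBtri : ∀ t, ∀ i j : Fin n, j ≤ i → B t i j = 0)
    (hTa : T a = 1)
    (hT : ∀ t ∈ Set.Icc a b, ∀ i j : Fin n,
      HasDerivWithinAt (fun s => T s i j) ((B t * T t) i j) (Set.Icc a b) t)
    (t : ℝ) (ht : t ∈ Set.Icc a b) :
    T t = ∑ k ∈ Finset.range n, picard n a B k t := by
  ext i j
  have := T_eq_picard_aux hab hBc hBtri hTa hT n i j (by have := j.isLt; omega) t ht
  have h2 : T t i j - (∑ k ∈ Finset.range n, picard n a B k t) i j = 0 := by
    simpa [Matrix.sub_apply, Matrix.sum_apply] using this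
  linarith
end main

lemma fubini_step (k : ℕ) (a s : ℝ) (f : (Fin (k+1) → ℝ) → ℝ) (hf : Continuous f) :
    ∫ t in simplexSet a s (k+1), f t
      = ∫ x in Set.Icc a s, ∫ u in simplexSet a x k, f (Fin.snoc u x) := by
  have hSm := measurableSet_simplexSet a s (k+1)
  have hS := isCompact_simplexSet a s (k+1)
  set e := MeasurableEquiv.piFinSuccAbove (fun _ : Fin (k+1) => ℝ) (Fin.last k) with he
  have mp : MeasurePreserving e volume volume :=
    volume_preserving_piFinSuccAbove (fun _ : Fin (k+1) => ℝ) (Fin.last k)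
  have hind : Integrable ((simplexSet a s (k+1)).indicator f) volume := by
    rw [integrable_indicator_iff hSm]
    exact hf.continuousOn.integrableOn_compact hS
  have hint : Integrable (fun p : ℝ × (Fin k → ℝ) => (simplexSet a s (k+1)).indicator f (e.symm p))
      volume := by
    exact ((mp.symm e).integrable_comp_emb e.symm.measurableEmbedding).2 hind
  calc ∫ t in simplexSet a s (k+1), f t
      = ∫ t, (simplexSet a s (k+1)).indicator f t := (integral_indicator hSm).symm
    _ = ∫ p : ℝ × (Fin k → ℝ), (simplexSet a s (k+1)).indicator f (e.symm p) :=
        ((mp.symm e).integral_comp' _).symm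
    _ = ∫ x : ℝ, ∫ u : Fin k → ℝ, (simplexSet a s (k+1)).indicator f (e.symm (x, u)) :=
        MeasureTheory.integral_prod _ hint
    _ = ∫ x : ℝ, (Set.Icc a s).indicator
          (fun x => ∫ u in simplexSet a x k, f (Fin.snoc u x)) x := by
        apply integral_congr_ae
        filter_upwards with x
        have hsymm : ∀ u : Fin k → ℝ, e.symm (x, u) = Fin.snoc u x := by
          intro u
          simp [he, MeasurableEquiv.piFinSuccAbove_symm_apply, Fin.insertNth_last', Fin.snocEquiv]
        by_cases hx : x ∈ Set.Icc a s
        · rw [Set.indicator_of_mem hx]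
          rw [← integral_indicator (measurableSet_simplexSet a x k)]
          apply integral_congr_ae
          filter_upwards with u
          rw [hsymm u]
          by_cases hu : u ∈ simplexSet a x k
          · rw [Set.indicator_of_mem hu,
              Set.indicator_of_mem ((snoc_mem_simplexSet_iff a s k u x).2 ⟨hx, hu⟩)]
          · rw [Set.indicator_of_notMem hu, Set.indicator_of_notMem]
            intro hc
            exact hu ((snoc_mem_simplexSet_iff a s k u x).1 hc).2
        · rw [Set.indicator_of_notMem hx]
          have : ∀ u : Fin k → ℝ, (simplexSet a s (k+1)).indicator f (e.symm (x, u)) = 0 := by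
            intro u
            rw [hsymm u]
            apply Set.indicator_of_notMem
            intro hc
            exact hx ((snoc_mem_simplexSet_iff a s k u x).1 hc).1
          simp [this]
    _ = ∫ x in Set.Icc a s, ∫ u in simplexSet a x k, f (Fin.snoc u x) :=
        integral_indicator measurableSet_Icc

section simplex
variable {n : ℕ} {B : ℝ → Matrix (Fin n) (Fin n) ℝ}

lemma cont_listProd (hBc : ∀ i j : Fin n, Continuous fun t => B t i j) (m : ℕ) :
    Continuous fun t : Fin m → ℝ => (List.ofFn fun r : Fin m => B (t r)).reverse.prod := by
  have hB : Continuous B := continuous_matrix fun i j => hBc i j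
  have : (fun t : Fin m → ℝ => (List.ofFn fun r : Fin m => B (t r)).reverse.prod)
      = fun t : Fin m → ℝ =>
        ((List.finRange m).reverse.map fun r => B (t r)).prod := by
    funext t
    rw [List.ofFn_eq_map, ← List.map_reverse]
  rw [this]
  exact continuous_list_prod _ fun r _ => hB.comp (continuous_apply r)

lemma snoc_listProd (m : ℕ) (u : Fin m → ℝ) (x : ℝ) :
    (List.ofFn fun r : Fin (m+1) => B (Fin.snoc (α := fun _ => ℝ) u x r)).reverse.prod
      = B x * (List.ofFn fun r : Fin m => B (u r)).reverse.prod := by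
  rw [List.ofFn_succ', List.concat_eq_append, List.reverse_append]
  simp [List.prod_cons]

lemma simplex_eq_picard (hBc : ∀ i j : Fin n, Continuous fun t => B t i j) (a : ℝ) :
    ∀ k : ℕ, ∀ s : ℝ, a ≤ s → ∀ i j : Fin n,
      (∫ t in simplexSet a s k, ((List.ofFn fun r : Fin k => B (t r)).reverse.prod) i j)
        = picard n a B k s i j := by
  intro k
  induction k with
  | zero =>
    intro s _ i j
    have huniv : simplexSet a s 0 = Set.univ := by
      ext t
      simp only [simplexSet, Set.mem_setOf_eq, Set.mem_univ, iff_true]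
      exact ⟨fun r => r.elim0, fun p q _ => le_of_eq (congrArg t (Subsingleton.elim p q))⟩
    have hm : (volume : Measure (Fin 0 → ℝ)) Set.univ = 1 := by
      simp [volume_pi, Measure.pi_univ]
    rw [huniv, Measure.restrict_univ]
    simp only [List.ofFn_zero, List.reverse_nil, List.prod_nil]
    rw [integral_const, measureReal_def, hm]
    simp [picard]
  | succ k ih =>
    intro s hs i j
    have hcontm := cont_listProd hBc (k+1)
    have hcont : Continuous fun t : Fin (k+1) → ℝ =>
        ((List.ofFn fun r : Fin (k+1) => B (t r)).reverse.prod) i j :=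
      (continuous_apply j).comp ((continuous_apply i).comp hcontm)
    rw [fubini_step k a s _ hcont]
    have hstep : ∀ x ∈ Set.Icc a s,
        (∫ u in simplexSet a x k,
          ((List.ofFn fun r : Fin (k+1) => B (Fin.snoc (α := fun _ => ℝ) u x r)).reverse.prod) i j)
        = (B x * picard n a B k x) i j := by
      intro x hx
      have hSx := isCompact_simplexSet a x k
      have hcontk := cont_listProd hBc k
      have h1 : ∀ u : Fin k → ℝ,
          ((List.ofFn fun r : Fin (k+1) => B (Fin.snoc (α := fun _ => ℝ) u x r)).reverse.prod) i j
          = ∑ l : Fin n, B x i l * ((List.ofFn fun r : Fin k => B (u r)).reverse.prod) l j := by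
        intro u
        rw [snoc_listProd, Matrix.mul_apply]
      simp only [h1]
      rw [integral_finset_sum _ (fun l _ => ?_)]
      · have h2 : ∀ l : Fin n,
            (∫ u in simplexSet a x k,
              B x i l * ((List.ofFn fun r : Fin k => B (u r)).reverse.prod) l j)
            = B x i l * picard n a B k x l j := by
          intro l
          rw [integral_const_mul, ih x hx.1 l j]
        simp only [h2]
        rw [Matrix.mul_apply]
      · exact (Continuous.continuousOn (by
          exact continuous_const.mul
            ((continuous_apply j).comp ((continuous_apply l).comp hcontk)))).integrableOn_compact hSx
    rw [setIntegral_congr_fun measurableSet_Icc hstep]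
    show _ = picard n a B (k+1) s i j
    simp only [picard]
    rw [intervalIntegral.integral_of_le hs, ← integral_Icc_eq_integral_Ioc]
end simplex

theorem parallel_transport_eq_iterated_integrals (n : ℕ) (hn : 1 ≤ n) (a b : ℝ) (hab : a ≤ b)
    (A : ℝ → Matrix (Fin n) (Fin n) ℝ)
    (hAcont : ∀ i j : Fin n, ContinuousOn (fun t => A t i j) (Set.Icc a b))
    (hAtri : ∀ t ∈ Set.Icc a b, ∀ i j : Fin n, j ≤ i → A t i j = 0)
    (T : ℝ → Matrix (Fin n) (Fin n) ℝ)
    (hTa : T a = 1)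
    (hT : ∀ t ∈ Set.Icc a b, ∀ i j : Fin n,
      HasDerivWithinAt (fun s => T s i j) ((A t * T t) i j) (Set.Icc a b) t) :
    (T b = 1 + ∑ k ∈ Finset.Icc 1 (n - 1), iteratedInt n a b A k) ∧
    (∀ k : ℕ, n ≤ k → iteratedInt n a b A k = 0) := by
  have hne : (Set.Icc a b).Nonempty := Set.nonempty_Icc.2 hab
  set B : ℝ → Matrix (Fin n) (Fin n) ℝ :=
    fun t => A ((Set.projIcc a b hab t : ℝ)) with hBdef
  have hproj : ∀ t : ℝ, ((Set.projIcc a b hab t : ℝ)) ∈ Set.Icc a b :=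
    fun t => (Set.projIcc a b hab t).2
  have hBeq : ∀ t ∈ Set.Icc a b, B t = A t := by
    intro t ht
    simp [hBdef, Set.projIcc_of_mem hab ht]
  have hBc : ∀ i j : Fin n, Continuous fun t => B t i j := by
    intro i j
    exact (hAcont i j).comp_continuous
      (continuous_subtype_val.comp (continuous_projIcc)) hproj
  have hBtri : ∀ t, ∀ i j : Fin n, j ≤ i → B t i j = 0 :=
    fun t i j hij => hAtri _ (hproj t) i j hij
  have hTB : ∀ t ∈ Set.Icc a b, ∀ i j : Fin n,
      HasDerivWithinAt (fun s => T s i j) ((B t * T t) i j) (Set.Icc a b) t := by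
    intro t ht i j
    rw [hBeq t ht]
    exact hT t ht i j
  have hIter : ∀ k : ℕ, iteratedInt n a b A k = fun i j =>
      ∫ t in simplexSet a b k, ((List.ofFn fun r : Fin k => B (t r)).reverse.prod) i j := by
    intro k
    funext i j
    apply setIntegral_congr_fun (measurableSet_simplexSet a b k)
    intro t ht
    have : (fun r : Fin k => A (t r)) = fun r => B (t r) :=
      funext fun r => (hBeq _ (ht.1 r)).symm
    simp only [this]
  constructor
  · have hTb := T_eq_picard_sum hab hBc hBtri hTa hTB b ⟨hab, le_rfl⟩
    have hrange : Finset.range n = insert 0 (Finset.Icc 1 (n-1)) := by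
      ext m
      simp only [Finset.mem_range, Finset.mem_insert, Finset.mem_Icc]
      omega
    rw [hTb, hrange, Finset.sum_insert (by simp)]
    have h0 : picard n a B 0 b = 1 := rfl
    rw [h0]
    congr 1
    apply Finset.sum_congr rfl
    intro k hk
    rw [hIter k]
    funext i j
    exact (simplex_eq_picard hBc a k b hab i j).symm
  · intro k hk
    funext i j
    rw [hIter k]
    show (∫ t in simplexSet a b k,
        ((List.ofFn fun r : Fin k => B (t r)).reverse.prod) i j) = (0 : Matrix (Fin n) (Fin n) ℝ) i j
    have : ∀ t ∈ simplexSet a b k,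
        ((List.ofFn fun r : Fin k => B (t r)).reverse.prod) i j = 0 := by
      intro t ht
      apply strictUpper_list_prod
      · intro M hM i' j' hij'
        rw [List.mem_reverse, List.mem_ofFn] at hM
        obtain ⟨r, rfl⟩ := hM
        exact hBtri (t r) i' j' hij'
      · rw [List.length_reverse, List.length_ofFn]
        have := j.isLt
        omega
    rw [setIntegral_congr_fun (measurableSet_simplexSet a b k) this]
    simp
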